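/- Let (x_t) and (y_t) be sequences in a convex compact set X of diameter d(X), and let c ∈ (0,1). Then the telescoping-type sum ∑_{t=1}^{T} t^c·(‖y_t − x_t‖² − ‖y_t − x_{t+1}‖²) is bounded above by 2·d(X)²·T^c·(1 + P_x/d(X)), where P_x = ∑_{t=1}^{T} ‖y_{t+1} − y_t‖ is the path length of the comparator sequence. -/
import Mathlib


/-- Telescoping-type bound: for sequences `x, y` in a convex set `X` of
diameter `d`, `∑_{t=1}^T t^c (‖y_t − x_t‖² − ‖y_t − x_{t+1}‖²)
≤ 2 d² T^c (1 + P_x/d)` with path length `P_x = ∑_{t=1}^T ‖y_{t+1} − y_t‖`. -/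
theorem telescoping_path_bound {n : ℕ} (X : Set (EuclideanSpace ℝ (Fin n)))
    (hX : Convex ℝ X) (d : ℝ) (hd : 0 < d)
    (hdiam : ∀ x ∈ X, ∀ y ∈ X, ‖x - y‖ ≤ d)
    (x y : ℕ → EuclideanSpace ℝ (Fin n))
    (hx : ∀ t, x t ∈ X) (hy : ∀ t, y t ∈ X)
    (c : ℝ) (hc0 : 0 < c) (hc1 : c < 1) (T : ℕ) (hT : 1 ≤ T) :
    ∑ t ∈ Finset.Icc 1 T,
        (t : ℝ) ^ c * (‖y t - x t‖ ^ 2 - ‖y t - x (t + 1)‖ ^ 2)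
      ≤ 2 * d ^ 2 * (T : ℝ) ^ c *
          (1 + (∑ t ∈ Finset.Icc 1 T, ‖y (t + 1) - y t‖) / d) := by
  set P := ∑ t ∈ Finset.Icc 1 T, ‖y (t + 1) - y t‖ with hPdef
  have hP0 : 0 ≤ P := Finset.sum_nonneg fun t _ => norm_nonneg _
  have hb : ∀ t, ‖y t - x t‖ ≤ d := fun t => hdiam _ (hy t) _ (hx t)
  have key : ∀ u v z : EuclideanSpace ℝ (Fin n), u ∈ X → v ∈ X → z ∈ X →
      ‖u - z‖ ^ 2 - ‖v - z‖ ^ 2 ≤ 2 * d * ‖u - v‖ := by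
    intro u v z hu hv hz
    have h1 : ‖u - z‖ ≤ d := hdiam _ hu _ hz
    have h2 : ‖v - z‖ ≤ d := hdiam _ hv _ hz
    have h3 : ‖u - z‖ - ‖v - z‖ ≤ ‖u - v‖ := by
      have := norm_sub_norm_le (u - z) (v - z)
      simpa [sub_sub_sub_cancel_right] using this
    nlinarith [norm_nonneg (u - z), norm_nonneg (v - z), norm_nonneg (u - v)]
  set F : ℕ → ℝ := fun t => (t : ℝ) ^ c * ‖y t - x t‖ ^ 2 with hFdef
  set G : ℕ → ℝ := fun t => (t : ℝ) ^ c with hGdef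
  have hTc0 : (0:ℝ) ≤ (T : ℝ) ^ c := Real.rpow_nonneg (by positivity) c
  have hterm : ∀ t ∈ Finset.Icc 1 T,
      (t : ℝ) ^ c * (‖y t - x t‖ ^ 2 - ‖y t - x (t + 1)‖ ^ 2)
      ≤ (F t - F (t + 1)) + (G (t + 1) - G t) * d ^ 2
        + (T : ℝ) ^ c * (2 * d * ‖y (t + 1) - y t‖) := by
    intro t ht
    simp only [Finset.mem_Icc] at ht
    have htc0 : (0:ℝ) ≤ (t : ℝ) ^ c := Real.rpow_nonneg (by positivity) c
    have htT : (t : ℝ) ^ c ≤ (T : ℝ) ^ c :=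
      Real.rpow_le_rpow (by positivity) (by exact_mod_cast ht.2) hc0.le
    have hmono : (t : ℝ) ^ c ≤ ((t : ℕ) + 1 : ℕ) ^ c :=
      Real.rpow_le_rpow (by positivity) (by push_cast; linarith) hc0.le
    have hk := key (y (t + 1)) (y t) (x (t + 1)) (hy _) (hy _) (hx _)
    have hb2 : ‖y (t + 1) - x (t + 1)‖ ^ 2 ≤ d ^ 2 := by
      have := hb (t + 1)
      nlinarith [norm_nonneg (y (t + 1) - x (t + 1))]
    have hm0 : (0:ℝ) ≤ ‖y (t + 1) - y t‖ := norm_nonneg _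
    simp only [hFdef, hGdef]
    push_cast
    nlinarith [mul_le_mul_of_nonneg_left hk htc0,
      mul_le_mul_of_nonneg_right htT (by positivity : (0:ℝ) ≤ 2 * d * ‖y (t + 1) - y t‖),
      mul_le_mul_of_nonneg_left hb2 (sub_nonneg.mpr (by push_cast at hmono ⊢; exact hmono))]
  have hsum := Finset.sum_le_sum hterm
  have htel1 : ∑ t ∈ Finset.Icc 1 T, (F t - F (t + 1)) = F 1 - F (T + 1) := by
    rw [← Finset.Ico_add_one_right_eq_Icc, Finset.sum_Ico_eq_sum_range]
    have := Finset.sum_range_sub' (fun i => F (1 + i)) T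
    simpa [add_comm, add_assoc, add_left_comm] using this
  have htel2 : ∑ t ∈ Finset.Icc 1 T, (G (t + 1) - G t) = G (T + 1) - G 1 := by
    rw [← Finset.Ico_add_one_right_eq_Icc, Finset.sum_Ico_eq_sum_range]
    have := Finset.sum_range_sub (fun i => G (1 + i)) T
    simpa [add_comm, add_assoc, add_left_comm] using this
  have hF1 : F 1 ≤ d ^ 2 := by
    simp only [hFdef, Nat.cast_one, Real.one_rpow, one_mul]
    have := hb 1
    nlinarith [norm_nonneg (y 1 - x 1)]
  have hFT : 0 ≤ F (T + 1) := by
    simp only [hFdef]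
    positivity
  have hG1 : G 1 = 1 := by simp [hGdef]
  have hGT : G (T + 1) ≤ 2 * (T : ℝ) ^ c := by
    simp only [hGdef]
    have h1 : ((T : ℕ) + 1 : ℕ) ^ c ≤ ((2 * T : ℕ) : ℝ) ^ c := by
      apply Real.rpow_le_rpow (by positivity) _ hc0.le
      push_cast
      have : (1:ℝ) ≤ (T : ℝ) := by exact_mod_cast hT
      linarith
    have h2 : ((2 * T : ℕ) : ℝ) ^ c = (2:ℝ) ^ c * (T : ℝ) ^ c := by
      push_cast
      rw [Real.mul_rpow (by norm_num) (by positivity)]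
    have h3 : (2:ℝ) ^ c ≤ 2 := by
      calc (2:ℝ) ^ c ≤ (2:ℝ) ^ (1:ℝ) :=
            Real.rpow_le_rpow_of_exponent_le (by norm_num) hc1.le
        _ = 2 := Real.rpow_one 2
    calc ((T : ℕ) + 1 : ℕ) ^ c ≤ (2:ℝ) ^ c * (T : ℝ) ^ c := by rw [← h2]; exact h1
      _ ≤ 2 * (T : ℝ) ^ c := by nlinarith
  have hsum3 : ∑ t ∈ Finset.Icc 1 T, (T : ℝ) ^ c * (2 * d * ‖y (t + 1) - y t‖)
      = (T : ℝ) ^ c * (2 * d) * P := by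
    rw [hPdef, Finset.mul_sum]
    congr 1
    ext t
    ring
  have hsplit : ∑ t ∈ Finset.Icc 1 T,
      ((F t - F (t + 1)) + (G (t + 1) - G t) * d ^ 2
        + (T : ℝ) ^ c * (2 * d * ‖y (t + 1) - y t‖))
      = (F 1 - F (T + 1)) + (G (T + 1) - G 1) * d ^ 2
        + (T : ℝ) ^ c * (2 * d) * P := by
    rw [Finset.sum_add_distrib, Finset.sum_add_distrib, ← Finset.sum_mul,
      htel1, htel2, hsum3]
  rw [hsplit] at hsum
  have hrhs : 2 * d ^ 2 * (T : ℝ) ^ c * (1 + P / d)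
      = 2 * d ^ 2 * (T : ℝ) ^ c + (T : ℝ) ^ c * (2 * d) * P := by
    field_simp
  rw [hrhs]
  rw [hG1] at hsum
  nlinarith [hsum, hF1, hFT, hGT, sq_nonneg d]
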